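/- arXiv:1305.4059 — 2 statements merged into one kernel-verified Lean document; each statement's English description precedes it below -/
import Mathlib

section
/- Let V be an ñ₊-module on which every weight vector in ñ₊ acts locally finitely, let v ∈ V, and let f(t) ∈ ℂ[t] be a nonzero polynomial divisible by t such that I(f)·v = 0. Then the subspace U(ñ₊)·v of V is finite-dimensional. -/
/- Common framework for formalizing statements from
   "Irreducible modules over affine Kac–Moody algebras which are locally finite
    over the positive part" (Guo–Zhao).

   Conventions:
   * `g` is a finite-dimensional simple complex Lie algebra.
   * The loop algebra `g ⊗ ℂ[t,t⁻¹]` is modelled by the vector space `ℤ →₀ g`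
     (`Finsupp.single p x` corresponds to `x ⊗ tᵖ`).
   * The affine algebra `ĝ = g ⊗ ℂ[t,t⁻¹] ⊕ ℂK` is any Lie algebra equipped with
     an `AffineAlg` structure (a linear equivalence with `(ℤ →₀ g) × ℂ` fixing the
     bracket on generators, where `(0,1)` is the central element `K`).
   * Similarly `t̃g = ĝ ⊕ ℂd` is any Lie algebra with an `AffineAlgD` structure on
     `(ℤ →₀ g) × ℂ × ℂ`, where `(0,1,0) = K` and `(0,0,1) = d`.
   * The current algebra `g ⊗ ℂ[t]` is `Polynomial ℂ ⊗[ℂ] g`, and the positive part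
     `ñ₊ = (g ⊗ tℂ[t]) ⊕ (n₊ ⊗ 1)` is any Lie algebra `nt` with an `NtAlg` structure:
     an injective Lie algebra morphism into the current algebra with range `ñ₊`.
   * Induced modules are specified by structures that pin them down uniquely up to
     isomorphism (`IndModule` via the PBW description `ℂ[d] ⊗ M`, and universal
     properties for induction from `ñ₊`).
-/

open scoped TensorProduct
open Polynomial

noncomputable section

namespace AffinePaper

variable (g : Type) [LieRing g] [LieAlgebra ℂ g]

attribute [local instance 100] LieRing.ofAssociativeRing

/-- The current algebra `g ⊗ ℂ[t]` is a complex Lie algebra. -/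
instance : LieAlgebra ℂ (Polynomial ℂ ⊗[ℂ] g) where
  lie_smul c x y := by
    rw [← algebraMap_smul (Polynomial ℂ) c y, ← algebraMap_smul (Polynomial ℂ) c ⁅x, y⁆]
    exact lie_smul (algebraMap ℂ (Polynomial ℂ) c) x y

/-- The weight space of `ad H` on `g` for a functional `α` on a subalgebra `H`. -/
def wtSpace (H : LieSubalgebra ℂ g) (α : Module.Dual ℂ H) : Submodule ℂ g where
  carrier := {x : g | ∀ h : H, ⁅(h : g), x⁆ = α h • x}
  add_mem' := fun {a b} ha hb h => by rw [lie_add, ha h, hb h, smul_add]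
  zero_mem' := fun h => by rw [lie_zero, smul_zero]
  smul_mem' := fun c x hx h => by rw [lie_smul, hx h]; exact smul_comm c (α h) x

/-- `α` is a root of `(g, H)`. -/
def IsRootOf (H : LieSubalgebra ℂ g) (α : Module.Dual ℂ H) : Prop :=
  α ≠ 0 ∧ wtSpace g H α ≠ ⊥

/-- A triangular decomposition `g = n₋ ⊕ h ⊕ n₊` of `g` relative to a Cartan
subalgebra `H`, given by a positive system `P` of roots. -/
structure TriangularData where
  H : LieSubalgebra ℂ g
  nPos : LieSubalgebra ℂ g
  nNeg : LieSubalgebra ℂ g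
  isCartan : H.IsCartanSubalgebra
  P : Set (Module.Dual ℂ H)
  pos_isRoot : ∀ α ∈ P, IsRootOf g H α
  pos_neg : ∀ α, IsRootOf g H α → (α ∈ P ↔ -α ∉ P)
  nPos_eq : nPos.toSubmodule = ⨆ α ∈ P, wtSpace g H α
  nNeg_eq : nNeg.toSubmodule = ⨆ α ∈ P, wtSpace g H (-α)
  triang : nNeg.toSubmodule ⊔ H.toSubmodule ⊔ nPos.toSubmodule = ⊤

variable {g}

/-- The simple roots of a positive system: the positive roots that are not sums of
two positive roots. -/
def TriangularData.simpleRoots (D : TriangularData g) : Set (Module.Dual ℂ D.H) :=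
  {α | α ∈ D.P ∧ ¬∃ β ∈ D.P, ∃ γ ∈ D.P, α = β + γ}

/-- `θ` is the highest root. -/
def TriangularData.IsHighestRoot (D : TriangularData g) (θ : Module.Dual ℂ D.H) : Prop :=
  θ ∈ D.P ∧ ∀ α ∈ D.P, ¬ IsRootOf g D.H (θ + α)

/-- `lam ∈ h*` is dominant integral: it takes nonnegative integer values on all
coroots (elements `hc = ⁅e, f⁆ ∈ [g_α, g_{-α}]` with `α hc = 2`, `α` positive). -/
def IsDominantIntegral (D : TriangularData g) (lam : Module.Dual ℂ D.H) : Prop :=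
  ∀ α ∈ D.P, ∀ (e f : g) (hc : D.H), e ∈ wtSpace g D.H α → f ∈ wtSpace g D.H (-α) →
    ⁅e, f⁆ = (hc : g) → α hc = 2 → ∃ n : ℕ, lam hc = (n : ℂ)

variable (g)

/-- The subspace `I(f) = n₊ ⊗ f ℂ[t] + (h ⊕ n₋) ⊗ t f ℂ[t]` of the current algebra. -/
def idealI (D : TriangularData g) (f : Polynomial ℂ) : Submodule ℂ (Polynomial ℂ ⊗[ℂ] g) :=
  Submodule.span ℂ
    ({z | ∃ x ∈ D.nPos, ∃ p : Polynomial ℂ, z = (f * p) ⊗ₜ[ℂ] x} ∪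
     {z | ∃ x : g, x ∈ D.H.toSubmodule ⊔ D.nNeg.toSubmodule ∧
        ∃ p : Polynomial ℂ, z = (X * f * p) ⊗ₜ[ℂ] x})

/-- The subspace `Σ_{α∈Δ₊∖Π} g_α ⊗ fℂ[t] + Σ_{α∈Π} g_α ⊗ tfℂ[t] +
Σ_{α∈Δ₊∖{θ}} g_{−α} ⊗ tfℂ[t] + g_{−θ} ⊗ t²fℂ[t] + h ⊗ tfℂ[t]` of the current
algebra (`θ` the highest root); for `f = 1` this is the subspace `K` of Lemma 4.2. -/
def bigK (D : TriangularData g) (θ : Module.Dual ℂ D.H) (f : Polynomial ℂ) :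
    Submodule ℂ (Polynomial ℂ ⊗[ℂ] g) :=
  Submodule.span ℂ
    ({z | ∃ α ∈ D.P, α ∉ D.simpleRoots ∧
        ∃ x ∈ wtSpace g D.H α, ∃ p : Polynomial ℂ, z = (f * p) ⊗ₜ[ℂ] x} ∪
     {z | ∃ α ∈ D.simpleRoots,
        ∃ x ∈ wtSpace g D.H α, ∃ p : Polynomial ℂ, z = (X * f * p) ⊗ₜ[ℂ] x} ∪
     {z | ∃ α ∈ D.P, α ≠ θ ∧
        ∃ x ∈ wtSpace g D.H (-α), ∃ p : Polynomial ℂ, z = (X * f * p) ⊗ₜ[ℂ] x} ∪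
     {z | ∃ x ∈ wtSpace g D.H (-θ), ∃ p : Polynomial ℂ, z = (X ^ 2 * f * p) ⊗ₜ[ℂ] x} ∪
     {z | ∃ x ∈ D.H, ∃ p : Polynomial ℂ, z = (X * f * p) ⊗ₜ[ℂ] x})

/-- The subspace of the current algebra corresponding to
`ñ₊ = (g ⊗ tℂ[t]) ⊕ (n₊ ⊗ 1)`. -/
def ntModel (D : TriangularData g) : Submodule ℂ (Polynomial ℂ ⊗[ℂ] g) :=
  Submodule.span ℂ
    ({z | ∃ (k : ℕ) (x : g), 1 ≤ k ∧ z = (X ^ k : Polynomial ℂ) ⊗ₜ[ℂ] x} ∪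
     {z | ∃ x ∈ D.nPos, z = (1 : Polynomial ℂ) ⊗ₜ[ℂ] x})

/-- A realization of the Lie algebra `ñ₊`: a Lie algebra `nt` together with an
injective morphism to the current algebra with range `(g ⊗ tℂ[t]) ⊕ (n₊ ⊗ 1)`. -/
structure NtAlg (D : TriangularData g) (nt : Type) [LieRing nt] [LieAlgebra ℂ nt] where
  ι : nt →ₗ⁅ℂ⁆ Polynomial ℂ ⊗[ℂ] g
  inj : Function.Injective ι
  range_eq : LinearMap.range (ι.toLinearMap) = ntModel g D

/-- Evaluation of the current algebra at a point `a ∈ ℂ`: `x ⊗ p(t) ↦ p(a) • x`. -/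
def ev (a : ℂ) : (Polynomial ℂ ⊗[ℂ] g) →ₗ[ℂ] g :=
  (TensorProduct.lid ℂ g).toLinearMap ∘ₗ
    (TensorProduct.map (Polynomial.aeval a).toLinearMap LinearMap.id)

/-- The canonical embedding of the current algebra `g ⊗ ℂ[t]` into the model
`ℤ →₀ g` of the loop algebra `g ⊗ ℂ[t,t⁻¹]` (sending `x ⊗ tᵏ` to `single k x`). -/
def toLoop : (Polynomial ℂ ⊗[ℂ] g) →ₗ[ℂ] (ℤ →₀ g) :=
  (Finsupp.lmapDomain g ℂ (Nat.cast : ℕ → ℤ)) ∘ₗ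
    (TensorProduct.finsuppScalarLeft ℂ g ℕ).toLinearMap ∘ₗ
    (TensorProduct.congr ((Polynomial.toFinsuppIsoAlg ℂ).toLinearEquiv.trans
        (AddMonoidAlgebra.coeffLinearEquiv ℂ))
      (LinearEquiv.refl ℂ g)).toLinearMap

/-- A weight vector of `ñ₊` (viewed inside the current algebra): a nonzero element
`x ⊗ tᵏ` with `x` in `h` or in a root space. -/
def IsWeightVec (D : TriangularData g) (w : Polynomial ℂ ⊗[ℂ] g) : Prop :=
  w ≠ 0 ∧ ∃ (k : ℕ) (x : g), w = (X ^ k : Polynomial ℂ) ⊗ₜ[ℂ] x ∧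
    (x ∈ D.H ∨ ∃ α, IsRootOf g D.H α ∧ x ∈ wtSpace g D.H α)

/-- An element `z` of a Lie algebra `L` acts locally finitely on a module `V`. -/
def ActsLocallyFinitely (L : Type) [LieRing L] (V : Type) [AddCommGroup V] [Module ℂ V]
    [LieRingModule L V] (z : L) : Prop :=
  ∀ v : V, ∃ W : Submodule ℂ V, v ∈ W ∧ FiniteDimensional ℂ W ∧ ∀ w ∈ W, ⁅z, w⁆ ∈ W

/-- A realization of the affine Lie algebra `ĝ = (g ⊗ ℂ[t,t⁻¹]) ⊕ ℂK` (without
derivation): a Lie algebra `gh` with a linear equivalence `e` with the model space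
`(ℤ →₀ g) × ℂ` such that `e (single p x, 0) = x ⊗ tᵖ`, `e (0,1) = K` is central, and
`[x ⊗ tᵖ, y ⊗ t^q] = [x,y] ⊗ t^{p+q} + p δ_{p+q,0} κ(x,y) K`, `κ` the Killing form. -/
structure AffineAlg (gh : Type) [LieRing gh] [LieAlgebra ℂ gh] where
  e : ((ℤ →₀ g) × ℂ) ≃ₗ[ℂ] gh
  brkt : ∀ (p q : ℤ) (x y : g),
    ⁅e (Finsupp.single p x, 0), e (Finsupp.single q y, 0)⁆ =
      e (Finsupp.single (p + q) ⁅x, y⁆,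
        if p + q = 0 then (p : ℂ) * killingForm ℂ g x y else 0)
  central : ∀ z : gh, ⁅e (0, 1), z⁆ = 0

/-- A realization of the affine Kac–Moody algebra `t̃g = (g ⊗ ℂ[t,t⁻¹]) ⊕ ℂK ⊕ ℂd`:
as in `AffineAlg`, with moreover `e (0,0,1) = d` satisfying `[d, x ⊗ tᵖ] = p x ⊗ tᵖ`. -/
structure AffineAlgD (gt : Type) [LieRing gt] [LieAlgebra ℂ gt] where
  e : ((ℤ →₀ g) × ℂ × ℂ) ≃ₗ[ℂ] gt
  brkt : ∀ (p q : ℤ) (x y : g),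
    ⁅e (Finsupp.single p x, 0, 0), e (Finsupp.single q y, 0, 0)⁆ =
      e (Finsupp.single (p + q) ⁅x, y⁆,
        (if p + q = 0 then (p : ℂ) * killingForm ℂ g x y else 0), 0)
  central : ∀ z : gt, ⁅e (0, 1, 0), z⁆ = 0
  dBrkt : ∀ (p : ℤ) (x : g),
    ⁅e (0, 0, 1), e (Finsupp.single p x, 0, 0)⁆ = e (Finsupp.single p ((p : ℂ) • x), 0, 0)

variable {g}

/-- `V` is the irreducible highest weight `g`-module with highest weight `lam`:
it is irreducible and has a highest weight vector of weight `lam`. -/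
structure IsHWModule (D : TriangularData g) (lam : Module.Dual ℂ D.H) (V : Type)
    [AddCommGroup V] [Module ℂ V] [LieRingModule g V] [LieModule ℂ g V] where
  v₀ : V
  ne : v₀ ≠ 0
  hwN : ∀ x ∈ D.nPos, ⁅x, v₀⁆ = 0
  hwH : ∀ h : D.H, ⁅(h : g), v₀⁆ = lam h • v₀
  irred : IsSimpleOrder (LieSubmodule ℂ g V)

/-- `E` is the evaluation module `E(λ, a) = V₁ ⊗ ⋯ ⊗ V_m` over `ĝ`:
`(x ⊗ tᵏ) · (v₁ ⊗ ⋯ ⊗ v_m) = Σᵢ aᵢᵏ v₁ ⊗ ⋯ ⊗ (x · vᵢ) ⊗ ⋯ ⊗ v_m`, and `K` acts by `0`. -/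
structure EvalModule {gh : Type} [LieRing gh] [LieAlgebra ℂ gh] (A : AffineAlg g gh)
    {m : ℕ} (a : Fin m → ℂ) (V : Fin m → Type) [∀ i, AddCommGroup (V i)]
    [∀ i, Module ℂ (V i)] [∀ i, LieRingModule g (V i)] [∀ i, LieModule ℂ g (V i)]
    (E : Type) [AddCommGroup E] [Module ℂ E] [LieRingModule gh E] [LieModule ℂ gh E] where
  ψ : E ≃ₗ[ℂ] PiTensorProduct ℂ V
  act : ∀ (k : ℤ) (x : g) (v : ∀ i, V i),
    ⁅A.e (Finsupp.single k x, 0), ψ.symm (PiTensorProduct.tprod ℂ v)⁆ =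
      ∑ i, (a i) ^ k • ψ.symm (PiTensorProduct.tprod ℂ (Function.update v i ⁅x, v i⁆))
  kAct : ∀ w : E, ⁅A.e (0, 1), w⁆ = 0

/-- `V` is the `t̃g`-module `M[d] = Ind_{ĝ}^{t̃g} M` induced from a `ĝ`-module `M`.
As a vector space `M[d] = ℂ[d] ⊗ M` (modelled by `ℕ →₀ M`, `single n v = dⁿ ⊗ v`);
`d` shifts the degree and `ĝ` acts on `d⁰ ⊗ M` as on `M`.  These data determine the
`t̃g`-module structure uniquely. -/
structure IndModule {gh gt : Type} [LieRing gh] [LieAlgebra ℂ gh] [LieRing gt]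
    [LieAlgebra ℂ gt] (T : AffineAlgD g gt) (A : AffineAlg g gh)
    (M : Type) [AddCommGroup M] [Module ℂ M] [LieRingModule gh M]
    (V : Type) [AddCommGroup V] [Module ℂ V] [LieRingModule gt V] where
  φ : (ℕ →₀ M) ≃ₗ[ℂ] V
  dAct : ∀ (n : ℕ) (v : M),
    ⁅T.e (0, 0, 1), φ (Finsupp.single n v)⁆ = φ (Finsupp.single (n + 1) v)
  rest : ∀ (u : (ℤ →₀ g) × ℂ) (v : M),
    ⁅T.e (u.1, u.2, 0), φ (Finsupp.single 0 v)⁆ = φ (Finsupp.single 0 ⁅A.e u, v⁆)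

/-- `S` is the `ñ₊`-module `S(η, λ, a) = ℂ v_η ⊗ L(λ₁) ⊗ ⋯ ⊗ L(λ_m)`:
`(x ⊗ p(t)) · (v₁ ⊗ ⋯ ⊗ v_m) = η(x ⊗ p(t)) (v₁ ⊗ ⋯ ⊗ v_m) + Σᵢ p(aᵢ) v₁ ⊗ ⋯ ⊗ (x vᵢ) ⊗ ⋯ ⊗ v_m`. -/
structure SModule {nt : Type} [LieRing nt] [LieAlgebra ℂ nt] {D : TriangularData g}
    (NT : NtAlg g D nt) (η : nt →ₗ⁅ℂ⁆ ℂ) {m : ℕ} (a : Fin m → ℂ)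
    (V : Fin m → Type) [∀ i, AddCommGroup (V i)] [∀ i, Module ℂ (V i)]
    [∀ i, LieRingModule g (V i)]
    (S : Type) [AddCommGroup S] [Module ℂ S] [LieRingModule nt S] where
  ψ : S ≃ₗ[ℂ] PiTensorProduct ℂ V
  act : ∀ (z : nt) (v : ∀ i, V i),
    ⁅z, ψ.symm (PiTensorProduct.tprod ℂ v)⁆ = η z • ψ.symm (PiTensorProduct.tprod ℂ v) +
      ∑ i, ψ.symm (PiTensorProduct.tprod ℂ (Function.update v i ⁅ev g (a i) (NT.ι z), v i⁆))

/-- `V` is the irreducible highest weight `ĝ`-module with highest weight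
`γ ∈ (h ⊕ ℂK)*`. -/
structure HWModuleAff {gh : Type} [LieRing gh] [LieAlgebra ℂ gh] (A : AffineAlg g gh)
    (D : TriangularData g) (γ : Module.Dual ℂ (↥D.H × ℂ)) (V : Type)
    [AddCommGroup V] [Module ℂ V] [LieRingModule gh V] [LieModule ℂ gh V] where
  v₀ : V
  ne : v₀ ≠ 0
  hwLoop : ∀ k : ℕ, 1 ≤ k → ∀ x : g, ⁅A.e (Finsupp.single (k : ℤ) x, 0), v₀⁆ = 0
  hwN : ∀ x ∈ D.nPos, ⁅A.e (Finsupp.single 0 x, 0), v₀⁆ = 0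
  hwH : ∀ (h : D.H) (c : ℂ), ⁅A.e (Finsupp.single 0 (h : g), c), v₀⁆ = γ (h, c) • v₀
  irred : IsSimpleOrder (LieSubmodule ℂ gh V)

/-- `W` is an irreducible Whittaker `ĝ`-module of type `η : ñ₊ → ℂ`. -/
structure WhittakerAff {gh : Type} [LieRing gh] [LieAlgebra ℂ gh] (A : AffineAlg g gh)
    {D : TriangularData g} {nt : Type} [LieRing nt] [LieAlgebra ℂ nt] (NT : NtAlg g D nt)
    (η : nt →ₗ⁅ℂ⁆ ℂ) (W : Type)
    [AddCommGroup W] [Module ℂ W] [LieRingModule gh W] [LieModule ℂ gh W] where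
  v₀ : W
  ne : v₀ ≠ 0
  wh : ∀ z : nt, ⁅A.e (toLoop g (NT.ι z), 0), v₀⁆ = η z • v₀
  irred : IsSimpleOrder (LieSubmodule ℂ gh W)

/-- `MS` is the induced `ĝ`-module `Ind_{ñ₊}^{ĝ} S`, characterized by its universal
property. -/
structure IndFromNt {gh : Type} [LieRing gh] [LieAlgebra ℂ gh] (A : AffineAlg g gh)
    {D : TriangularData g} {nt : Type} [LieRing nt] [LieAlgebra ℂ nt] (NT : NtAlg g D nt)
    (S : Type) [AddCommGroup S] [Module ℂ S] [LieRingModule nt S]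
    (MS : Type) [AddCommGroup MS] [Module ℂ MS] [LieRingModule gh MS]
    [LieModule ℂ gh MS] where
  ι₀ : S →ₗ[ℂ] MS
  compat : ∀ (z : nt) (s : S), ⁅A.e (toLoop g (NT.ι z), 0), ι₀ s⁆ = ι₀ ⁅z, s⁆
  univ : ∀ (W : Type) [AddCommGroup W] [Module ℂ W] [LieRingModule gh W]
    [LieModule ℂ gh W] (f : S →ₗ[ℂ] W),
    (∀ (z : nt) (s : S), ⁅A.e (toLoop g (NT.ι z), 0), f s⁆ = f ⁅z, s⁆) →
    ∃! F : MS →ₗ⁅ℂ,gh⁆ W, F.toLinearMap ∘ₗ ι₀ = f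

/-- `M0` is the universal Whittaker module `M(η) = Ind_{ñ₊}^{ĝ} ℂ_η`, characterized
by its universal property. -/
structure UnivWhittaker {gh : Type} [LieRing gh] [LieAlgebra ℂ gh] (A : AffineAlg g gh)
    {D : TriangularData g} {nt : Type} [LieRing nt] [LieAlgebra ℂ nt] (NT : NtAlg g D nt)
    (η : nt →ₗ⁅ℂ⁆ ℂ) (M0 : Type) [AddCommGroup M0] [Module ℂ M0] [LieRingModule gh M0]
    [LieModule ℂ gh M0] where
  u₀ : M0
  rel : ∀ z : nt, ⁅A.e (toLoop g (NT.ι z), 0), u₀⁆ = η z • u₀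
  univ : ∀ (W : Type) [AddCommGroup W] [Module ℂ W] [LieRingModule gh W]
    [LieModule ℂ gh W] (w : W),
    (∀ z : nt, ⁅A.e (toLoop g (NT.ι z), 0), w⁆ = η z • w) →
    ∃! F : M0 →ₗ⁅ℂ,gh⁆ W, F u₀ = w

variable (g)

/-- A bundled Lie module over a complex Lie algebra `L`. -/
structure LieModOf (L : Type) [LieRing L] [LieAlgebra ℂ L] : Type 1 where
  carrier : Type
  [ac : AddCommGroup carrier]
  [mo : Module ℂ carrier]
  [lrm : LieRingModule L carrier]
  [lm : LieModule ℂ L carrier]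

attribute [instance] LieModOf.ac LieModOf.mo LieModOf.lrm LieModOf.lm

/-!
`I(f)` is an ideal of `ñ₊` killing `v`, and division with remainder by `f` shows that `ñ₊`
is spanned modulo `I(f)` by finitely many weight vectors `z₀, …, z_{N-1}` of the form
`tᵏ ⊗ x`. The PBW argument then shows that `U(ñ₊) v` is spanned by the ordered monomials
`z_{i₁} ⋯ z_{iₖ} v` with `i₁ ≥ ⋯ ≥ iₖ`: swapping two adjacent factors costs a commutator,
which is a combination of the `zᵢ` modulo `I(f)` and so yields shorter monomials. Local
finiteness of the `zᵢ` gives finite-dimensional subspaces `W₀ ⊆ W₁ ⊆ ⋯` with `v ∈ W₀` and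
`W_{i+1}` stable under `zᵢ`, and every ordered monomial lies in `W_N`.
-/

section Span

variable {R M N P : Type*} [CommRing R] [AddCommGroup M] [Module R M] [AddCommGroup N]
  [Module R N] [AddCommGroup P] [Module R P]

theorem apply_mem_of_mem_span {β : M →ₗ[R] N →ₗ[R] P} {s : Set M} {t : Set N}
    {A : Submodule R P} (h : ∀ a ∈ s, ∀ b ∈ t, β a b ∈ A) {a : M} {b : N}
    (ha : a ∈ Submodule.span R s) (hb : b ∈ Submodule.span R t) : β a b ∈ A := by
  have hab := Submodule.apply_mem_map₂ β ha hb
  rw [Submodule.map₂_span_span] at hab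
  exact Submodule.span_le.mpr (Set.image2_subset_iff.mpr h) hab

theorem span_sup_comap_eq_top {φ : M →ₗ[R] N} {S : Set M} {J : Submodule R N}
    (h : LinearMap.range φ ≤ Submodule.span R (φ '' S) ⊔ J) :
    Submodule.span R S ⊔ J.comap φ = ⊤ := by
  refine eq_top_iff.mpr fun y _ => ?_
  have hy := h (LinearMap.mem_range_self φ y)
  rw [← Submodule.map_span] at hy
  obtain ⟨_, ⟨a, ha, rfl⟩, b, hb, hab⟩ := Submodule.mem_sup.mp hy
  refine Submodule.mem_sup.mpr ⟨a, ha, y - a, ?_, add_sub_cancel a y⟩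
  rwa [Submodule.mem_comap, map_sub, ← hab, add_sub_cancel_left]

end Span

section OrderedMonomials

variable {R L M : Type*} [CommRing R] [LieRing L] [AddCommGroup M] [Module R M]
  [LieRingModule L M]

theorem lie_mem_of_mem_span [LieAlgebra R L] [LieModule R L M] {x : L} {t : Set M}
    {P : Submodule R M} (h : ∀ m ∈ t, ⁅x, m⁆ ∈ P) {m : M} (hm : m ∈ Submodule.span R t) :
    ⁅x, m⁆ ∈ P :=
  (Submodule.span_le (p := P.comap (LieModule.toEnd R L M x))).mpr h hm

variable {N : ℕ} (z : Fin N → L) (v : M)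

def monomialAct (l : List (Fin N)) : M := l.foldr (fun i w => ⁅z i, w⁆) v

def orderedMonomials : Set M :=
  {w | ∃ l : List (Fin N), l.Pairwise (· ≥ ·) ∧ monomialAct z v l = w}

variable (R) in
/-- The PBW filtration of `U(L) v`, shifted by one so that its `0`-th piece is `⊥`. -/
def orderedMonomialSpan (n : ℕ) : Submodule R M :=
  Submodule.span R
    {w | ∃ l : List (Fin N), l.Pairwise (· ≥ ·) ∧ l.length < n ∧ monomialAct z v l = w}

variable {z v}

theorem orderedMonomialSpan_mono : Monotone (orderedMonomialSpan R z v) :=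
  fun _ _ hmn => Submodule.span_mono fun _ ⟨l, hl, hlen, hw⟩ => ⟨l, hl, hlen.trans_le hmn, hw⟩

theorem monomialAct_mem_orderedMonomialSpan {l : List (Fin N)} (hl : l.Pairwise (· ≥ ·))
    {n : ℕ} (hn : l.length < n) : monomialAct z v l ∈ orderedMonomialSpan R z v n :=
  Submodule.subset_span ⟨l, hl, hn, rfl⟩

theorem orderedMonomialSpan_le_span_orderedMonomials (n : ℕ) :
    orderedMonomialSpan R z v n ≤ Submodule.span R (orderedMonomials z v) :=
  Submodule.span_mono fun _ ⟨l, hl, _, hw⟩ => ⟨l, hl, hw⟩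

theorem orderedMonomialSpan_zero : orderedMonomialSpan R z v 0 = ⊥ := by
  simp [orderedMonomialSpan]

theorem monomialAct_mem_of_chain {W : ℕ → Submodule R M} (hv : v ∈ W 0) (hW : Monotone W)
    (hinv : ∀ i : Fin N, ∀ w ∈ W (i + 1), ⁅z i, w⁆ ∈ W (i + 1)) {l : List (Fin N)}
    (hl : l.Pairwise (· ≥ ·)) {n : ℕ} (hn : ∀ i ∈ l, (i : ℕ) < n) : monomialAct z v l ∈ W n := by
  induction l generalizing n with
  | nil => exact hW n.zero_le hv
  | cons i l ih =>
    obtain ⟨hil, hl⟩ := List.pairwise_cons.mp hl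
    have hlw : monomialAct z v l ∈ W (i + 1) :=
      ih hl fun j hj => Nat.lt_succ_of_le (Fin.le_def.mp (hil j hj))
    exact hW (hn i List.mem_cons_self) (hinv i _ hlw)

variable [LieAlgebra R L] [LieModule R L M] {I : LieIdeal R L} {n : ℕ}

theorem lie_mem_orderedMonomialSpan_succ
    (hspan : Submodule.span R (Set.range z) ⊔ I.toSubmodule = ⊤)
    (hI : ∀ u ∈ I, ∀ w ∈ orderedMonomialSpan R z v n, ⁅u, w⁆ ∈ orderedMonomialSpan R z v n)
    (hz : ∀ i, ∀ w ∈ orderedMonomialSpan R z v n, ⁅z i, w⁆ ∈ orderedMonomialSpan R z v (n + 1))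
    (y : L) {w : M} (hw : w ∈ orderedMonomialSpan R z v n) :
    ⁅y, w⁆ ∈ orderedMonomialSpan R z v (n + 1) := by
  obtain ⟨a, ha, u, hu, rfl⟩ := Submodule.mem_sup.mp (hspan ▸ Submodule.mem_top : y ∈ _)
  obtain ⟨c, rfl⟩ := (Submodule.mem_span_range_iff_exists_fun R).mp ha
  rw [add_lie, sum_lie]
  refine add_mem (sum_mem fun i _ => ?_) (orderedMonomialSpan_mono n.le_succ (hI u hu w hw))
  rw [smul_lie]
  exact Submodule.smul_mem _ _ (hz i w hw)

theorem lie_mem_orderedMonomialSpan_succ_of_mem_ideal (hv : ∀ u ∈ I, ⁅u, v⁆ = 0)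
    (hI : ∀ u ∈ I, ∀ w ∈ orderedMonomialSpan R z v n, ⁅u, w⁆ ∈ orderedMonomialSpan R z v n)
    (hz : ∀ i, ∀ w ∈ orderedMonomialSpan R z v n, ⁅z i, w⁆ ∈ orderedMonomialSpan R z v (n + 1))
    {u : L} (hu : u ∈ I) {w : M} (hw : w ∈ orderedMonomialSpan R z v (n + 1)) :
    ⁅u, w⁆ ∈ orderedMonomialSpan R z v (n + 1) := by
  refine lie_mem_of_mem_span ?_ hw
  rintro _ ⟨_ | ⟨j, l⟩, hl, hlen, rfl⟩
  · simp [monomialAct, hv u hu]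
  have hlw : monomialAct z v l ∈ orderedMonomialSpan R z v n :=
    monomialAct_mem_orderedMonomialSpan (List.pairwise_cons.mp hl).2 (by simpa using hlen)
  rw [monomialAct, List.foldr_cons, leibniz_lie]
  exact add_mem (orderedMonomialSpan_mono n.le_succ (hI _ (lie_mem_left R L I u (z j) hu) _ hlw))
    (hz j _ (hI u hu _ hlw))

theorem lie_mem_orderedMonomialSpan_succ_succ
    (hspan : Submodule.span R (Set.range z) ⊔ I.toSubmodule = ⊤)
    (hI : ∀ u ∈ I, ∀ w ∈ orderedMonomialSpan R z v n, ⁅u, w⁆ ∈ orderedMonomialSpan R z v n)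
    (hz : ∀ i, ∀ w ∈ orderedMonomialSpan R z v n, ⁅z i, w⁆ ∈ orderedMonomialSpan R z v (n + 1))
    (i : Fin N) {w : M} (hw : w ∈ orderedMonomialSpan R z v (n + 1)) :
    ⁅z i, w⁆ ∈ orderedMonomialSpan R z v (n + 2) := by
  induction i using WellFoundedGT.induction generalizing w with
  | _ i ih =>
  refine lie_mem_of_mem_span ?_ hw
  rintro _ ⟨_ | ⟨j, l⟩, hl, hlen, rfl⟩
  · exact monomialAct_mem_orderedMonomialSpan (List.pairwise_singleton _ i) (by simp)
  by_cases hji : j ≤ i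
  · refine monomialAct_mem_orderedMonomialSpan (l := i :: j :: l) ?_ (by simpa using hlen)
    exact List.pairwise_cons.mpr ⟨by grind [List.pairwise_cons], hl⟩
  -- `z i z j = [z i, z j] + z j z i`, and `j > i` lets the induction hypothesis handle `z j`.
  have hlw : monomialAct z v l ∈ orderedMonomialSpan R z v n :=
    monomialAct_mem_orderedMonomialSpan (List.pairwise_cons.mp hl).2 (by simpa using hlen)
  rw [monomialAct, List.foldr_cons, leibniz_lie]
  exact add_mem (orderedMonomialSpan_mono (n + 1).le_succ
      (lie_mem_orderedMonomialSpan_succ hspan hI hz _ hlw))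
    (ih j (not_le.mp hji) (hz i _ hlw))

theorem lie_mem_orderedMonomialSpan (hv : ∀ u ∈ I, ⁅u, v⁆ = 0)
    (hspan : Submodule.span R (Set.range z) ⊔ I.toSubmodule = ⊤) (n : ℕ) :
    (∀ u ∈ I, ∀ w ∈ orderedMonomialSpan R z v n, ⁅u, w⁆ ∈ orderedMonomialSpan R z v n) ∧
      ∀ i, ∀ w ∈ orderedMonomialSpan R z v n, ⁅z i, w⁆ ∈ orderedMonomialSpan R z v (n + 1) := by
  induction n with
  | zero => simp [orderedMonomialSpan_zero]
  | succ n ih =>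
    exact ⟨fun _ hu _ hw => lie_mem_orderedMonomialSpan_succ_of_mem_ideal hv ih.1 ih.2 hu hw,
      fun i _ hw => lie_mem_orderedMonomialSpan_succ_succ hspan ih.1 ih.2 i hw⟩

theorem lieSpan_le_span_orderedMonomials (hv : ∀ u ∈ I, ⁅u, v⁆ = 0)
    (hspan : Submodule.span R (Set.range z) ⊔ I.toSubmodule = ⊤) :
    (LieSubmodule.lieSpan R L {v}).toSubmodule ≤ Submodule.span R (orderedMonomials z v) := by
  have hstep (y : L) :
      ∀ m ∈ orderedMonomials z v, ⁅y, m⁆ ∈ Submodule.span R (orderedMonomials z v) := by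
    rintro _ ⟨l, hl, rfl⟩
    obtain ⟨hI, hz⟩ := lie_mem_orderedMonomialSpan hv hspan (l.length + 1)
    exact orderedMonomialSpan_le_span_orderedMonomials _ <| lie_mem_orderedMonomialSpan_succ
      hspan hI hz y (monomialAct_mem_orderedMonomialSpan hl l.length.lt_succ_self)
  let U : LieSubmodule R L M :=
    { Submodule.span R (orderedMonomials z v) with
      lie_mem := fun {y} _ hw => lie_mem_of_mem_span (hstep y) hw }
  have hvU : v ∈ U := orderedMonomialSpan_le_span_orderedMonomials 1
    (monomialAct_mem_orderedMonomialSpan (l := []) List.Pairwise.nil Nat.one_pos)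
  exact fun x hx => (LieSubmodule.lieSpan_le (N := U)).mpr (Set.singleton_subset_iff.mpr hvU) hx

end OrderedMonomials

section LocallyFinite

variable {L V : Type} [LieRing L] [AddCommGroup V] [Module ℂ V] [LieRingModule L V]

theorem ActsLocallyFinitely.exists_le_invariant {z : L} (hz : ActsLocallyFinitely L V z)
    (F : Submodule ℂ V) [FiniteDimensional ℂ F] :
    ∃ F' : Submodule ℂ V, F ≤ F' ∧ FiniteDimensional ℂ F' ∧ ∀ w ∈ F', ⁅z, w⁆ ∈ F' := by
  obtain ⟨s, rfl⟩ := Module.Finite.iff_fg.mp ‹FiniteDimensional ℂ F›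
  choose W hmem hfin hinv using hz
  refine ⟨s.sup W, Submodule.span_le.mpr fun b hb => Finset.le_sup (f := W) hb (hmem b),
    Submodule.finiteDimensional_finset_sup _ _, ?_⟩
  refine Finset.sup_induction (p := fun F : Submodule ℂ V => ∀ w ∈ F, ⁅z, w⁆ ∈ F)
    (fun w hw => by simp [(Submodule.mem_bot ℂ).mp hw]) (fun A hA B hB w hw => ?_)
    fun b _ => hinv b
  obtain ⟨a, ha, b, hb, rfl⟩ := Submodule.mem_sup.mp hw
  rw [lie_add]
  exact add_mem (Submodule.mem_sup_left (hA a ha)) (Submodule.mem_sup_right (hB b hb))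

theorem exists_invariant_chain {N : ℕ} {z : Fin N → L} (hz : ∀ i, ActsLocallyFinitely L V (z i))
    (v : V) : ∃ W : ℕ → Submodule ℂ V, v ∈ W 0 ∧ Monotone W ∧
      (∀ n, FiniteDimensional ℂ (W n)) ∧ ∀ i : Fin N, ∀ w ∈ W (i + 1), ⁅z i, w⁆ ∈ W (i + 1) := by
  have step (n : ℕ) (F : {F : Submodule ℂ V // FiniteDimensional ℂ F}) :
      ∃ F' : {F : Submodule ℂ V // FiniteDimensional ℂ F}, F.1 ≤ F'.1 ∧
        ∀ i : Fin N, (i : ℕ) = n → ∀ w ∈ F'.1, ⁅z i, w⁆ ∈ F'.1 := by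
    have := F.2
    by_cases hn : n < N
    · obtain ⟨F', hle, hfin, hinv⟩ := (hz ⟨n, hn⟩).exists_le_invariant F.1
      exact ⟨⟨F', hfin⟩, hle, fun i hi => (Fin.ext (b := ⟨n, hn⟩) hi) ▸ hinv⟩
    · exact ⟨F, le_rfl, fun i hi => absurd (hi ▸ i.isLt) hn⟩
  choose next hle hinv using step
  let W (n : ℕ) : {F : Submodule ℂ V // FiniteDimensional ℂ F} :=
    Nat.rec ⟨ℂ ∙ v, inferInstance⟩ next n
  exact ⟨fun n => (W n).1, Submodule.mem_span_singleton_self v,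
    monotone_nat_of_le_succ fun n => hle n (W n), fun n => (W n).2, fun i => hinv i (W i) i rfl⟩

theorem finiteDimensional_lieSpan_of_span_sup_eq_top [LieAlgebra ℂ L] [LieModule ℂ L V]
    (I : LieIdeal ℂ L) {v : V} (hv : ∀ u ∈ I, ⁅u, v⁆ = 0) {N : ℕ} {z : Fin N → L}
    (hz : ∀ i, ActsLocallyFinitely L V (z i))
    (hspan : Submodule.span ℂ (Set.range z) ⊔ I.toSubmodule = ⊤) :
    FiniteDimensional ℂ (LieSubmodule.lieSpan ℂ L {v}) := by
  obtain ⟨W, hvW, hW, hfin, hinv⟩ := exists_invariant_chain hz v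
  have hmon : orderedMonomials z v ⊆ W N := fun _ ⟨_, hl, hw⟩ =>
    hw ▸ monomialAct_mem_of_chain hvW hW hinv hl fun i _ => i.isLt
  exact Submodule.finiteDimensional_of_le
    ((lieSpan_le_span_orderedMonomials hv hspan).trans (Submodule.span_le.mpr hmon))

end LocallyFinite

theorem exists_finite_subset_span_eq {K W : Type*} [DivisionRing K] [AddCommGroup W] [Module K W]
    [FiniteDimensional K W] (S : Set W) :
    ∃ B ⊆ S, B.Finite ∧ 0 ∉ B ∧ Submodule.span K B = Submodule.span K S := by
  obtain ⟨B, hBS, hspan, hli⟩ := exists_linearIndependent K S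
  exact ⟨B, hBS, hli.setFinite, fun h0 => hli.ne_zero ⟨0, h0⟩ rfl, hspan⟩

theorem mul_tmul_mem_of_forall_lt_natDegree {K W : Type*} [Field K] [AddCommGroup W] [Module K W]
    {f : K[X]} (hf : f ≠ 0) {r : K[X]} {x : W} {A : Submodule K (K[X] ⊗[K] W)}
    (hlow : ∀ k < f.natDegree, (r * X ^ k) ⊗ₜ[K] x ∈ A) (hmul : ∀ q, (r * f * q) ⊗ₜ[K] x ∈ A)
    (p : K[X]) : (r * p) ⊗ₜ[K] x ∈ A := by
  rw [← EuclideanDomain.mod_add_div p f, mul_add, TensorProduct.add_tmul, ← mul_assoc]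
  refine add_mem ?_ (hmul _)
  have hmod : p % f ∈ degreeLT K f.natDegree :=
    mem_degreeLT.mpr (degree_eq_natDegree hf ▸ degree_mod_lt p hf)
  classical
  rw [degreeLT_eq_span_X_pow] at hmod
  refine (Submodule.span_le (p := A.comap
    ((TensorProduct.mk K K[X] W).flip x ∘ₗ LinearMap.mulLeft K r))).mpr ?_ hmod
  intro _ hmem
  obtain ⟨k, hk, rfl⟩ := Finset.mem_image.mp hmem
  exact hlow k (Finset.mem_range.mp hk)

variable {g}

theorem isWeightVec_X_pow_tmul (D : TriangularData g) (k : ℕ) {x : g} (hx0 : x ≠ 0)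
    (hx : x ∈ D.H ∨ ∃ α, IsRootOf g D.H α ∧ x ∈ wtSpace g D.H α) :
    IsWeightVec g D ((X ^ k : ℂ[X]) ⊗ₜ[ℂ] x) := by
  refine ⟨fun h => hx0 ?_, k, x, rfl, hx⟩
  -- evaluating at `t = 1` recovers `x`
  simpa [ev] using congrArg (ev g 1) h

namespace TriangularData

variable (D : TriangularData g)

theorem sup_nPos_eq_top : D.H.toSubmodule ⊔ D.nNeg.toSubmodule ⊔ D.nPos.toSubmodule = ⊤ := by
  rw [sup_comm D.H.toSubmodule, D.triang]

def posRootVectors : Set g := ⋃ α ∈ D.P, wtSpace g D.H α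

def nonposWeightVectors : Set g := (D.H.toSubmodule : Set g) ∪ ⋃ α ∈ D.P, wtSpace g D.H (-α)

theorem span_posRootVectors : Submodule.span ℂ D.posRootVectors = D.nPos.toSubmodule := by
  simp only [posRootVectors, Submodule.span_iUnion₂, Submodule.span_eq, D.nPos_eq]

theorem span_nonposWeightVectors :
    Submodule.span ℂ D.nonposWeightVectors = D.H.toSubmodule ⊔ D.nNeg.toSubmodule := by
  simp only [nonposWeightVectors, Submodule.span_union, Submodule.span_iUnion₂,
    Submodule.span_eq, D.nNeg_eq]

theorem isWeightVec_of_mem_posRootVectors {x : g} (hx : x ∈ D.posRootVectors) (k : ℕ)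
    (hx0 : x ≠ 0) : IsWeightVec g D ((X ^ k : ℂ[X]) ⊗ₜ[ℂ] x) := by
  obtain ⟨α, hα, hxα⟩ := Set.mem_iUnion₂.mp hx
  exact isWeightVec_X_pow_tmul D k hx0 (Or.inr ⟨α, D.pos_isRoot α hα, hxα⟩)

theorem isWeightVec_of_mem_nonposWeightVectors {x : g} (hx : x ∈ D.nonposWeightVectors)
    (k : ℕ) (hx0 : x ≠ 0) : IsWeightVec g D ((X ^ k : ℂ[X]) ⊗ₜ[ℂ] x) := by
  refine isWeightVec_X_pow_tmul D k hx0 (hx.imp id fun hx => ?_)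
  obtain ⟨α, hα, hxα⟩ := Set.mem_iUnion₂.mp hx
  refine ⟨-α, ⟨neg_ne_zero.mpr (D.pos_isRoot α hα).1, fun hbot => hx0 ?_⟩, hxα⟩
  rwa [hbot, SetLike.mem_coe, Submodule.mem_bot] at hxα

end TriangularData

section IdealI

variable {D : TriangularData g} {f : ℂ[X]}

theorem mul_X_tmul_mem_idealI (q : ℂ[X]) (x : g) : (X * f * q) ⊗ₜ[ℂ] x ∈ idealI g D f := by
  suffices ⊤ ≤ (idealI g D f).comap (TensorProduct.mk ℂ ℂ[X] g (X * f * q)) from this trivial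
  rw [← D.sup_nPos_eq_top]
  refine sup_le (fun x hx => Submodule.subset_span (Or.inr ⟨x, hx, q, rfl⟩))
    fun x hx => Submodule.subset_span (Or.inl ⟨x, hx, X * q, ?_⟩)
  simp only [TensorProduct.mk_apply]
  ring_nf

theorem lie_mem_idealI {x y : ℂ[X] ⊗[ℂ] g} (hx : x ∈ ntModel g D) (hy : y ∈ idealI g D f) :
    ⁅x, y⁆ ∈ idealI g D f := by
  refine apply_mem_of_mem_span (β := (LieModule.toEnd ℂ _ _).toLinearMap) ?_ hx hy
  rintro _ (⟨k, a, hk, rfl⟩ | ⟨a, ha, rfl⟩) _ (⟨w, hw, p, rfl⟩ | ⟨w, hw, p, rfl⟩) <;>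
    simp only [LieHom.coe_toLinearMap, LieModule.toEnd_apply_apply,
      LieAlgebra.ExtendScalars.bracket_tmul]
  · obtain ⟨k, rfl⟩ := Nat.exists_eq_add_of_le' hk
    rw [show X ^ (k + 1) * (f * p) = X * f * (X ^ k * p) by ring]
    exact mul_X_tmul_mem_idealI _ _
  · rw [show X ^ k * (X * f * p) = X * f * (X ^ k * p) by ring]
    exact mul_X_tmul_mem_idealI _ _
  · rw [one_mul]
    exact Submodule.subset_span (Or.inl ⟨_, D.nPos.lie_mem ha hw, p, rfl⟩)
  · rw [one_mul]
    exact mul_X_tmul_mem_idealI _ _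

variable {nt : Type} [LieRing nt] [LieAlgebra ℂ nt]

def NtAlg.idealI (NT : NtAlg g D nt) (f : ℂ[X]) : LieIdeal ℂ nt :=
  { (AffinePaper.idealI g D f).comap NT.ι.toLinearMap with
    lie_mem := fun {x u} hu => by
      change NT.ι ⁅x, u⁆ ∈ AffinePaper.idealI g D f
      rw [LieHom.map_lie]
      exact lie_mem_idealI (NT.range_eq ▸ LinearMap.mem_range_self _ x) hu }

end IdealI

def quotientSpanningSet (d : ℕ) (B C : Set g) : Set (ℂ[X] ⊗[ℂ] g) :=
  Set.image2 (· ⊗ₜ[ℂ] ·) ((fun k : ℕ => (X : ℂ[X]) ^ k) '' Set.Iio d) B ∪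
    Set.image2 (· ⊗ₜ[ℂ] ·) ((fun k : ℕ => (X : ℂ[X]) ^ (k + 1)) '' Set.Iio d) C

section QuotientSpanningSet

variable (D : TriangularData g) (d : ℕ) {B C : Set g}

theorem quotientSpanningSet_finite (hB : B.Finite) (hC : C.Finite) :
    (quotientSpanningSet d B C).Finite :=
  (((Set.finite_Iio d).image _).image2 _ hB).union (((Set.finite_Iio d).image _).image2 _ hC)

theorem isWeightVec_of_mem_quotientSpanningSet (hB : B ⊆ D.posRootVectors)
    (hC : C ⊆ D.nonposWeightVectors) (hB0 : 0 ∉ B) (hC0 : 0 ∉ C) {w : ℂ[X] ⊗[ℂ] g}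
    (hw : w ∈ quotientSpanningSet d B C) : IsWeightVec g D w := by
  rcases hw with ⟨_, ⟨k, -, rfl⟩, x, hx, rfl⟩ | ⟨_, ⟨k, -, rfl⟩, x, hx, rfl⟩
  · exact D.isWeightVec_of_mem_posRootVectors (hB hx) k (ne_of_mem_of_not_mem hx hB0)
  · exact D.isWeightVec_of_mem_nonposWeightVectors (hC hx) _ (ne_of_mem_of_not_mem hx hC0)

theorem quotientSpanningSet_subset_ntModel (hB : B ⊆ D.nPos) :
    quotientSpanningSet d B C ⊆ ntModel g D := by
  rintro _ (⟨_, ⟨k, -, rfl⟩, x, hx, rfl⟩ | ⟨_, ⟨k, -, rfl⟩, x, -, rfl⟩)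
  · rcases k with _ | k
    · exact Submodule.subset_span (Or.inr ⟨x, hB hx, rfl⟩)
    · exact Submodule.subset_span (Or.inl ⟨k + 1, x, k.succ_pos, rfl⟩)
  · exact Submodule.subset_span (Or.inl ⟨k + 1, x, k.succ_pos, rfl⟩)

variable {D} {f : ℂ[X]}

theorem ntModel_le_span_quotientSpanningSet_sup_idealI (hf : f ≠ 0)
    (hB : Submodule.span ℂ B = D.nPos.toSubmodule)
    (hC : Submodule.span ℂ C = D.H.toSubmodule ⊔ D.nNeg.toSubmodule) :
    ntModel g D ≤ Submodule.span ℂ (quotientSpanningSet f.natDegree B C) ⊔ idealI g D f := by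
  set A := Submodule.span ℂ (quotientSpanningSet f.natDegree B C) ⊔ idealI g D f
  have hpos (p : ℂ[X]) : D.nPos.toSubmodule ≤ A.comap (TensorProduct.mk ℂ ℂ[X] g p) := by
    rw [← hB, Submodule.span_le]
    intro x hx
    rw [SetLike.mem_coe, Submodule.mem_comap, TensorProduct.mk_apply, ← one_mul p]
    refine mul_tmul_mem_of_forall_lt_natDegree hf (fun k hk => ?_) (fun q => ?_) p
    · exact Submodule.mem_sup_left (Submodule.subset_span
        (Or.inl ⟨_, ⟨k, hk, rfl⟩, x, hx, by rw [one_mul]⟩))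
    · have hx' : x ∈ D.nPos.toSubmodule := hB ▸ Submodule.subset_span hx
      exact Submodule.mem_sup_right (Submodule.subset_span
        (Or.inl ⟨x, hx', q, by rw [one_mul]⟩))
  have hnonpos (p : ℂ[X]) : D.H.toSubmodule ⊔ D.nNeg.toSubmodule ≤
      A.comap (TensorProduct.mk ℂ ℂ[X] g (X * p)) := by
    rw [← hC, Submodule.span_le]
    intro x hx
    rw [SetLike.mem_coe, Submodule.mem_comap, TensorProduct.mk_apply]
    refine mul_tmul_mem_of_forall_lt_natDegree hf (fun k hk => ?_) (fun q => ?_) p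
    · exact Submodule.mem_sup_left (Submodule.subset_span
        (Or.inr ⟨_, ⟨k, hk, rfl⟩, x, hx, by dsimp only; rw [pow_succ']⟩))
    · exact Submodule.mem_sup_right (Submodule.subset_span
        (Or.inr ⟨x, hC ▸ Submodule.subset_span hx, q, rfl⟩))
  rw [ntModel, Submodule.span_le]
  rintro _ (⟨k, x, hk, rfl⟩ | ⟨x, hx, rfl⟩)
  · obtain ⟨k, rfl⟩ := Nat.exists_eq_add_of_le' hk
    have hle := sup_le (hnonpos (X ^ k)) (hpos (X * X ^ k))
    rw [D.sup_nPos_eq_top] at hle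
    rw [pow_succ']
    exact hle Submodule.mem_top
  · exact hpos 1 hx

variable (D)

theorem exists_finite_weightVec_span [FiniteDimensional ℂ g] (hf : f ≠ 0) :
    ∃ Z : Set (ℂ[X] ⊗[ℂ] g), Z.Finite ∧ (∀ w ∈ Z, IsWeightVec g D w) ∧ Z ⊆ ntModel g D ∧
      ntModel g D ≤ Submodule.span ℂ Z ⊔ idealI g D f := by
  obtain ⟨B, hBS, hBfin, hB0, hB⟩ := exists_finite_subset_span_eq (K := ℂ) D.posRootVectors
  obtain ⟨C, hCS, hCfin, hC0, hC⟩ := exists_finite_subset_span_eq (K := ℂ) D.nonposWeightVectors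
  rw [D.span_posRootVectors] at hB
  rw [D.span_nonposWeightVectors] at hC
  exact ⟨_, quotientSpanningSet_finite _ hBfin hCfin,
    fun _ => isWeightVec_of_mem_quotientSpanningSet D _ hBS hCS hB0 hC0,
    quotientSpanningSet_subset_ntModel D _ fun x hx => (hB ▸ Submodule.subset_span hx :),
    ntModel_le_span_quotientSpanningSet_sup_idealI hf hB hC⟩

end QuotientSpanningSet

theorem statement6_general (g : Type) [LieRing g] [LieAlgebra ℂ g] [FiniteDimensional ℂ g]
    (D : TriangularData g)
    (nt : Type) [LieRing nt] [LieAlgebra ℂ nt] (NT : NtAlg g D nt)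
    (V : Type) [AddCommGroup V] [Module ℂ V] [LieRingModule nt V] [LieModule ℂ nt V]
    (hlf : ∀ z : nt, IsWeightVec g D (NT.ι z) → ActsLocallyFinitely nt V z)
    (v : V) (f : Polynomial ℂ) (hf : f ≠ 0)
    (hann : ∀ z : nt, NT.ι z ∈ idealI g D f → ⁅z, v⁆ = 0) :
    FiniteDimensional ℂ ↥(LieSubmodule.lieSpan ℂ nt {v}) := by
  obtain ⟨Z, hZfin, hZwt, hZnt, hZspan⟩ := exists_finite_weightVec_span D hf
  obtain ⟨N, e, rfl⟩ := hZfin.fin_embedding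
  have hlift (i : Fin N) : ∃ z : nt, NT.ι z = e i := by
    have hi := hZnt (Set.mem_range_self i)
    rwa [← NT.range_eq] at hi
  choose z hz using hlift
  have hιz : NT.ι.toLinearMap '' Set.range z = Set.range e := by
    rw [← Set.range_comp]
    exact congrArg Set.range (funext hz)
  refine finiteDimensional_lieSpan_of_span_sup_eq_top (NT.idealI f) hann
    (fun i => hlf _ (hz i ▸ hZwt _ (Set.mem_range_self i))) ?_
  exact span_sup_comap_eq_top (hιz ▸ NT.range_eq ▸ hZspan)

/-- if every weight vector of `ñ₊` acts locally finitely on the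
`ñ₊`-module `V`, `t ∣ f`, `f ≠ 0` and `I(f) v = 0`, then `U(ñ₊) v` (the
`ñ₊`-submodule generated by `v`) is finite-dimensional. -/
theorem statement6 (g : Type) [LieRing g] [LieAlgebra ℂ g] [FiniteDimensional ℂ g]
    [LieAlgebra.IsSimple ℂ g] (D : TriangularData g)
    (nt : Type) [LieRing nt] [LieAlgebra ℂ nt] (NT : NtAlg g D nt)
    (V : Type) [AddCommGroup V] [Module ℂ V] [LieRingModule nt V] [LieModule ℂ nt V]
    (hlf : ∀ z : nt, IsWeightVec g D (NT.ι z) → ActsLocallyFinitely nt V z)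
    (v : V) (f : Polynomial ℂ) (hf : f ≠ 0) (hdvd : X ∣ f)
    (hann : ∀ z : nt, NT.ι z ∈ idealI g D f → ⁅z, v⁆ = 0) :
    FiniteDimensional ℂ ↥(LieSubmodule.lieSpan ℂ nt {v}) :=
  statement6_general g D nt NT V hlf v f hf hann

end AffinePaper
end
end

section
/- Let η : ñ₊ → ℂ be a Lie algebra homomorphism, let a = (a₁,…,a_m) ∈ ℂ^m have nonzero pairwise distinct entries, and let λ = (λ₁,…,λ_m) ∈ (h*)^m. Then there is an isomorphism of ĝ-modules Ind_{ñ₊}^{ĝ} S(η,λ,a) ≅ E(λ,a) ⊗ M(η), where the right-hand side carries the diagonal ĝ-action. -/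
/- Common framework for formalizing statements from
   "Irreducible modules over affine Kac–Moody algebras which are locally finite
    over the positive part" (Guo–Zhao).

   Conventions:
   * `g` is a finite-dimensional simple complex Lie algebra.
   * The loop algebra `g ⊗ ℂ[t,t⁻¹]` is modelled by the vector space `ℤ →₀ g`
     (`Finsupp.single p x` corresponds to `x ⊗ tᵖ`).
   * The affine algebra `ĝ = g ⊗ ℂ[t,t⁻¹] ⊕ ℂK` is any Lie algebra equipped with
     an `AffineAlg` structure (a linear equivalence with `(ℤ →₀ g) × ℂ` fixing the
     bracket on generators, where `(0,1)` is the central element `K`).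
   * Similarly `t̃g = ĝ ⊕ ℂd` is any Lie algebra with an `AffineAlgD` structure on
     `(ℤ →₀ g) × ℂ × ℂ`, where `(0,1,0) = K` and `(0,0,1) = d`.
   * The current algebra `g ⊗ ℂ[t]` is `Polynomial ℂ ⊗[ℂ] g`, and the positive part
     `ñ₊ = (g ⊗ tℂ[t]) ⊕ (n₊ ⊗ 1)` is any Lie algebra `nt` with an `NtAlg` structure:
     an injective Lie algebra morphism into the current algebra with range `ñ₊`.
   * Induced modules are specified by structures that pin them down uniquely up to
     isomorphism (`IndModule` via the PBW description `ℂ[d] ⊗ M`, and universal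
     properties for induction from `ñ₊`).
-/

open scoped TensorProduct
open Polynomial

attribute [local instance 100] LieRing.ofAssociativeRing

noncomputable section

namespace TensorProduct.LieModule

variable {R L M N P : Type*} [CommRing R] [LieRing L] [LieAlgebra R L]
  [AddCommGroup M] [Module R M] [LieRingModule L M] [LieModule R L M]
  [AddCommGroup N] [Module R N] [LieRingModule L N] [LieModule R L N]
  [AddCommGroup P] [Module R P] [LieRingModule L P] [LieModule R L P]

variable (R L M N) in
def commLie : M ⊗[R] N ≃ₗ⁅R,L⁆ N ⊗[R] M :=
  { TensorProduct.comm R M N with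
    map_lie' := fun {x t} => by
      change TensorProduct.comm R M N ⁅x, t⁆ = ⁅x, TensorProduct.comm R M N t⁆
      induction t using TensorProduct.induction_on with
      | zero => simp
      | add t t' h h' => rw [lie_add, map_add, map_add, lie_add, h, h']
      | tmul m n => simp [lie_tmul_right, add_comm] }

def liftRightLie (f : N →ₗ⁅R,L⁆ M →ₗ[R] P) : M ⊗[R] N →ₗ⁅R,L⁆ P :=
  (liftLie R L N M P f).comp (commLie R L M N : M ⊗[R] N →ₗ⁅R,L⁆ N ⊗[R] M)

@[simp]
theorem liftRightLie_tmul (f : N →ₗ⁅R,L⁆ M →ₗ[R] P) (m : M) (n : N) :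
    liftRightLie f (m ⊗ₜ n) = f n m :=
  liftLie_apply R L N M P f n m

def curryRightLie (f : M ⊗[R] N →ₗ⁅R,L⁆ P) : N →ₗ⁅R,L⁆ M →ₗ[R] P :=
  (liftLie R L N M P).symm (f.comp (commLie R L M N).symm)

@[simp]
theorem curryRightLie_apply (f : M ⊗[R] N →ₗ⁅R,L⁆ P) (n : N) (m : M) :
    curryRightLie f n m = f (m ⊗ₜ n) := by
  rw [← liftLie_apply, curryRightLie, LinearEquiv.apply_symm_apply]
  rfl

theorem curryRightLie_injective :
    Function.Injective (curryRightLie : (M ⊗[R] N →ₗ⁅R,L⁆ P) → N →ₗ⁅R,L⁆ M →ₗ[R] P) := by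
  intro f₁ f₂ h
  ext t
  induction t using TensorProduct.induction_on with
  | zero => simp
  | add t t' h h' => rw [map_add, map_add, h, h']
  | tmul m n => rw [← curryRightLie_apply, h, curryRightLie_apply]

end TensorProduct.LieModule

namespace AffinePaper

open TensorProduct.LieModule

section TensorIdentity

variable {g : Type} [LieRing g] [LieAlgebra ℂ g] {gh : Type} [LieRing gh] [LieAlgebra ℂ gh]
  {A : AffineAlg g gh} {D : TriangularData g} {nt : Type} [LieRing nt] [LieAlgebra ℂ nt]
  {NT : NtAlg g D nt} {η : nt →ₗ⁅ℂ⁆ ℂ}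
  {E : Type} [AddCommGroup E] [Module ℂ E] [LieRingModule gh E] [LieModule ℂ gh E]
  {N : Type} [AddCommGroup N] [Module ℂ N] [LieRingModule gh N] [LieModule ℂ gh N]
  {Mη : Type} [AddCommGroup Mη] [Module ℂ Mη] [LieRingModule gh Mη] [LieModule ℂ gh Mη]
  {S : Type} [AddCommGroup S] [Module ℂ S] [LieRingModule nt S]
  {MS : Type} [AddCommGroup MS] [Module ℂ MS] [LieRingModule gh MS] [LieModule ℂ gh MS]

variable (A NT η) in
def IsWhittakerVec (w : N) : Prop :=
  ∀ z : nt, ⁅A.e (toLoop g (NT.ι z), 0), w⁆ = η z • w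

theorem isWhittakerVec_linearMap_iff {φ : E →ₗ[ℂ] N} :
    IsWhittakerVec A NT η φ ↔
      ∀ z e, ⁅A.e (toLoop g (NT.ι z), 0), φ e⁆ = η z • φ e + φ ⁅A.e (toLoop g (NT.ι z), 0), e⁆ := by
  simp only [IsWhittakerVec, LinearMap.ext_iff, LieHom.lie_apply, LinearMap.smul_apply,
    sub_eq_iff_eq_add]

namespace UnivWhittaker

variable (hMη : UnivWhittaker A NT η Mη)

def lift (w : N) (hw : IsWhittakerVec A NT η w) : Mη →ₗ⁅ℂ,gh⁆ N :=
  (hMη.univ N w hw).exists.choose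

@[simp]
theorem lift_u₀ (w : N) (hw : IsWhittakerVec A NT η w) : hMη.lift w hw hMη.u₀ = w :=
  (hMη.univ N w hw).exists.choose_spec

theorem hom_ext {f₁ f₂ : Mη →ₗ⁅ℂ,gh⁆ N} (h : f₁ hMη.u₀ = f₂ hMη.u₀) : f₁ = f₂ := by
  have hw : IsWhittakerVec A NT η (f₂ hMη.u₀) := fun z => by
    rw [← LieModuleHom.map_lie, hMη.rel, map_smul]
  exact (hMη.univ N _ hw).unique h rfl

theorem tensor_hom_ext {f₁ f₂ : E ⊗[ℂ] Mη →ₗ⁅ℂ,gh⁆ N}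
    (h : ∀ e, f₁ (e ⊗ₜ hMη.u₀) = f₂ (e ⊗ₜ hMη.u₀)) : f₁ = f₂ :=
  curryRightLie_injective (hMη.hom_ext (LinearMap.ext fun e => by simpa using h e))

end UnivWhittaker

namespace IndFromNt

variable (hMS : IndFromNt A NT S MS)

def lift (f : S →ₗ[ℂ] N) (hf : ∀ z s, ⁅A.e (toLoop g (NT.ι z), 0), f s⁆ = f ⁅z, s⁆) :
    MS →ₗ⁅ℂ,gh⁆ N :=
  (hMS.univ N f hf).exists.choose

@[simp]
theorem lift_ι₀ (f : S →ₗ[ℂ] N) (hf : ∀ z s, ⁅A.e (toLoop g (NT.ι z), 0), f s⁆ = f ⁅z, s⁆)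
    (s : S) : hMS.lift f hf (hMS.ι₀ s) = f s :=
  LinearMap.congr_fun (hMS.univ N f hf).exists.choose_spec s

theorem hom_ext {f₁ f₂ : MS →ₗ⁅ℂ,gh⁆ N} (h : ∀ s, f₁ (hMS.ι₀ s) = f₂ (hMS.ι₀ s)) : f₁ = f₂ := by
  have hf : ∀ z s, ⁅A.e (toLoop g (NT.ι z), 0), f₂ (hMS.ι₀ s)⁆ = f₂ (hMS.ι₀ ⁅z, s⁆) :=
    fun z s => by rw [← LieModuleHom.map_lie, hMS.compat]
  exact (hMS.univ N (f₂.toLinearMap ∘ₗ hMS.ι₀) hf).unique (LinearMap.ext h) rfl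

end IndFromNt

theorem IndFromNt.nonempty_lieModuleEquiv_tensor (hMS : IndFromNt A NT S MS)
    (hMη : UnivWhittaker A NT η Mη) (e : S ≃ₗ[ℂ] E)
    (he : ∀ z s, e ⁅z, s⁆ = η z • e s + ⁅A.e (toLoop g (NT.ι z), 0), e s⁆) :
    Nonempty (MS ≃ₗ⁅ℂ,gh⁆ E ⊗[ℂ] Mη) := by
  let f : S →ₗ[ℂ] E ⊗[ℂ] Mη := (TensorProduct.mk ℂ E Mη).flip hMη.u₀ ∘ₗ e.toLinearMap
  have hf : ∀ z s, ⁅A.e (toLoop g (NT.ι z), 0), f s⁆ = f ⁅z, s⁆ := by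
    intro z s
    simp only [f, LinearMap.comp_apply, LinearMap.flip_apply, TensorProduct.mk_apply,
      LinearEquiv.coe_coe, lie_tmul_right, hMη.rel, he, TensorProduct.add_tmul,
      TensorProduct.tmul_smul, TensorProduct.smul_tmul', add_comm]
  let F := hMS.lift f hf
  have hφ : IsWhittakerVec A NT η (hMS.ι₀ ∘ₗ e.symm.toLinearMap) := by
    refine isWhittakerVec_linearMap_iff.2 fun z x => ?_
    obtain ⟨s, rfl⟩ := e.surjective x
    rw [eq_sub_of_add_eq' (he z s).symm]
    simp [hMS.compat]
  let G := liftRightLie (hMη.lift _ hφ)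
  have hGF : G.comp F = LieModuleHom.id := hMS.hom_ext fun s => by simp [F, G, f]
  have hFG : F.comp G = LieModuleHom.id := hMη.tensor_hom_ext fun x => by simp [F, G, f]
  exact ⟨{ F with
    invFun := G
    left_inv := LieModuleHom.congr_fun hGF
    right_inv := LieModuleHom.congr_fun hFG }⟩

end TensorIdentity

section EvaluationModules

variable {g : Type} [LieRing g] [LieAlgebra ℂ g]

theorem toLoop_monomial_tmul (n : ℕ) (r : ℂ) (x : g) :
    toLoop g (monomial n r ⊗ₜ[ℂ] x) = Finsupp.single (n : ℤ) (r • x) := by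
  have hcoeff : ((toFinsuppIsoAlg ℂ).toLinearEquiv.trans (AddMonoidAlgebra.coeffLinearEquiv ℂ))
      (monomial n r) = Finsupp.single n r := by
    simp [toFinsuppIsoAlg, toFinsuppIso, toFinsupp_monomial]
  simp only [toLoop, LinearMap.coe_comp, Function.comp_apply, LinearEquiv.coe_coe]
  erw [TensorProduct.congr_tmul, hcoeff, TensorProduct.finsuppScalarLeft_apply_tmul,
    Finsupp.sum_single_index (by simp)]
  simp [Finsupp.lmapDomain, Finsupp.mapDomain_single]

theorem ev_monomial_tmul (b : ℂ) (n : ℕ) (r : ℂ) (x : g) :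
    ev g b (monomial n r ⊗ₜ[ℂ] x) = (r * b ^ n) • x := by
  simp [ev, aeval_monomial]

variable {gh : Type} [LieRing gh] [LieAlgebra ℂ gh] {A : AffineAlg g gh}
  {m : ℕ} {a : Fin m → ℂ} {V : Fin m → Type} [∀ i, AddCommGroup (V i)] [∀ i, Module ℂ (V i)]
  [∀ i, LieRingModule g (V i)] [∀ i, LieModule ℂ g (V i)]
  {E : Type} [AddCommGroup E] [Module ℂ E] [LieRingModule gh E] [LieModule ℂ gh E]

theorem EvalModule.lie_tprod_current (hE : EvalModule A a V E) (c : ℂ[X] ⊗[ℂ] g)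
    (v : ∀ i, V i) :
    ⁅A.e (toLoop g c, 0), hE.ψ.symm (PiTensorProduct.tprod ℂ v)⁆ =
      ∑ i, hE.ψ.symm (PiTensorProduct.tprod ℂ (Function.update v i ⁅ev g (a i) c, v i⁆)) := by
  let P (c : ℂ[X] ⊗[ℂ] g) : Prop := ⁅A.e (toLoop g c, 0), hE.ψ.symm (PiTensorProduct.tprod ℂ v)⁆ =
      ∑ i, hE.ψ.symm (PiTensorProduct.tprod ℂ (Function.update v i ⁅ev g (a i) c, v i⁆))
  have hadd (c c' : ℂ[X] ⊗[ℂ] g) (h : P c) (h' : P c') : P (c + c') := by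
    simp only [P] at h h' ⊢
    rw [map_add, ← add_zero (0 : ℂ), ← Prod.mk_add_mk, map_add, add_lie, h, h',
      ← Finset.sum_add_distrib]
    simp only [map_add, add_lie, MultilinearMap.map_update_add]
  change P c
  induction c using TensorProduct.induction_on with
  | zero => simp [P, ← Prod.zero_eq_mk]
  | add c c' h h' => exact hadd c c' h h'
  | tmul p x =>
    induction p using Polynomial.induction_on' with
    | add p q hp hq => rw [TensorProduct.add_tmul]; exact hadd _ _ hp hq
    | monomial n r =>
      simp only [P]
      rw [toLoop_monomial_tmul, hE.act]
      simp only [ev_monomial_tmul, mul_smul, smul_lie, MultilinearMap.map_update_smul, map_smul,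
        zpow_natCast, smul_comm r]

variable {D : TriangularData g} {nt : Type} [LieRing nt] [LieAlgebra ℂ nt]
  {NT : NtAlg g D nt} {η : nt →ₗ⁅ℂ⁆ ℂ}
  {S : Type} [AddCommGroup S] [Module ℂ S] [LieRingModule nt S] [LieModule ℂ nt S]

theorem SModule.lie_eq_smul_add_lie (hS : SModule NT η a V S) (hE : EvalModule A a V E)
    (z : nt) (s : S) :
    (hS.ψ ≪≫ₗ hE.ψ.symm) ⁅z, s⁆ =
      η z • (hS.ψ ≪≫ₗ hE.ψ.symm) s + ⁅A.e (toLoop g (NT.ι z), 0), (hS.ψ ≪≫ₗ hE.ψ.symm) s⁆ := by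
  have key : hE.ψ.symm.toLinearMap ∘ₗ hS.ψ.toLinearMap ∘ₗ LieModule.toEnd ℂ nt S z ∘ₗ
        hS.ψ.symm.toLinearMap =
      η z • hE.ψ.symm.toLinearMap +
        LieModule.toEnd ℂ gh E (A.e (toLoop g (NT.ι z), 0)) ∘ₗ hE.ψ.symm.toLinearMap := by
    refine PiTensorProduct.ext (MultilinearMap.ext fun v => ?_)
    simp [hS.act, hE.lie_tprod_current]
  simpa using LinearMap.congr_fun key (hS.ψ s)

end EvaluationModules

theorem statement13_general (g : Type) [LieRing g] [LieAlgebra ℂ g] (D : TriangularData g)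
    (gh : Type) [LieRing gh] [LieAlgebra ℂ gh] (A : AffineAlg g gh)
    (nt : Type) [LieRing nt] [LieAlgebra ℂ nt] (NT : NtAlg g D nt)
    (η : nt →ₗ⁅ℂ⁆ ℂ)
    (m : ℕ) (a : Fin m → ℂ)
    (V : Fin m → Type) [∀ i, AddCommGroup (V i)] [∀ i, Module ℂ (V i)]
    [∀ i, LieRingModule g (V i)] [∀ i, LieModule ℂ g (V i)]
    (S : Type) [AddCommGroup S] [Module ℂ S] [LieRingModule nt S] [LieModule ℂ nt S]
    (hS : SModule NT η a V S)
    (E : Type) [AddCommGroup E] [Module ℂ E] [LieRingModule gh E] [LieModule ℂ gh E]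
    (hE : EvalModule A a V E)
    (MS : Type) [AddCommGroup MS] [Module ℂ MS] [LieRingModule gh MS] [LieModule ℂ gh MS]
    (hMS : IndFromNt A NT S MS)
    (Mη : Type) [AddCommGroup Mη] [Module ℂ Mη] [LieRingModule gh Mη] [LieModule ℂ gh Mη]
    (hMη : UnivWhittaker A NT η Mη) :
    Nonempty (MS ≃ₗ⁅ℂ,gh⁆ (E ⊗[ℂ] Mη)) :=
  hMS.nonempty_lieModuleEquiv_tensor hMη _ (hS.lie_eq_smul_add_lie hE)

/-- there is an isomorphism of `ĝ`-modules
`Ind_{ñ₊}^{ĝ} S(η, λ, a) ≅ E(λ, a) ⊗ M(η)`. -/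
theorem statement13 (g : Type) [LieRing g] [LieAlgebra ℂ g] [FiniteDimensional ℂ g]
    [LieAlgebra.IsSimple ℂ g] (D : TriangularData g)
    (gh : Type) [LieRing gh] [LieAlgebra ℂ gh] (A : AffineAlg g gh)
    (nt : Type) [LieRing nt] [LieAlgebra ℂ nt] (NT : NtAlg g D nt)
    (η : nt →ₗ⁅ℂ⁆ ℂ)
    (m : ℕ) (a : Fin m → ℂ) (ha : ∀ i, a i ≠ 0) (hinj : Function.Injective a)
    (lam : Fin m → Module.Dual ℂ D.H)
    (V : Fin m → Type) [∀ i, AddCommGroup (V i)] [∀ i, Module ℂ (V i)]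
    [∀ i, LieRingModule g (V i)] [∀ i, LieModule ℂ g (V i)]
    (hV : ∀ i, IsHWModule D (lam i) (V i))
    (S : Type) [AddCommGroup S] [Module ℂ S] [LieRingModule nt S] [LieModule ℂ nt S]
    (hS : SModule NT η a V S)
    (E : Type) [AddCommGroup E] [Module ℂ E] [LieRingModule gh E] [LieModule ℂ gh E]
    (hE : EvalModule A a V E)
    (MS : Type) [AddCommGroup MS] [Module ℂ MS] [LieRingModule gh MS] [LieModule ℂ gh MS]
    (hMS : IndFromNt A NT S MS)
    (Mη : Type) [AddCommGroup Mη] [Module ℂ Mη] [LieRingModule gh Mη] [LieModule ℂ gh Mη]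
    (hMη : UnivWhittaker A NT η Mη) :
    Nonempty (MS ≃ₗ⁅ℂ,gh⁆ (E ⊗[ℂ] Mη)) :=
  statement13_general g D gh A nt NT η m a V S hS E hE MS hMS Mη hMη

end AffinePaper
end
end
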